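/- arXiv:2506.17583 — 8 statements merged into one kernel-verified Lean document; each statement's English description precedes it below -/
import Mathlib

section
/- For every integer g ≥ 2 there exists a constant C_g > 0, depending only on g, such that for all real r > 0, the iterated integral 2^g·∫_{[0,r]^g} ∏_{j=1}^{g} sinh²(r_j) · ∏_{1≤j<k≤g} sinh²((r_j−r_k)/2)·sinh²((r_j+r_k)/2) dr₁…dr_g is at most C_g·(cosh r)^{g²−2}·(sinh r)^{g+2}. -/
open Real MeasureTheory

private lemma sinh_half_mul_sinh_half (x y : ℝ) :
    Real.sinh ((x - y) / 2) * Real.sinh ((x + y) / 2) = (Real.cosh x - Real.cosh y) / 2 := by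
  have h1 := Real.cosh_add ((x + y) / 2) ((x - y) / 2)
  have h2 := Real.cosh_sub ((x + y) / 2) ((x - y) / 2)
  have e1 : (x + y) / 2 + (x - y) / 2 = x := by ring
  have e2 : (x + y) / 2 - (x - y) / 2 = y := by ring
  rw [e1] at h1; rw [e2] at h2
  linear_combination (h2 - h1) / 2

private lemma two_mul_card_pairs_le (g : ℕ) :
    2 * (Finset.univ.filter (fun p : Fin g × Fin g => p.1 < p.2)).card ≤ g ^ 2 - g := by
  set S := Finset.univ.filter (fun p : Fin g × Fin g => p.1 < p.2) with hS
  set T := Finset.univ.filter (fun p : Fin g × Fin g => p.2 < p.1) with hT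
  have hcard : S.card = T.card := by
    apply Finset.card_bij' (fun p _ => Prod.swap p) (fun p _ => Prod.swap p) <;>
      simp [hS, hT]
  have hdisj : Disjoint S T := by
    rw [Finset.disjoint_left]
    intro p hp hq
    simp [hS, hT] at hp hq
    exact absurd hq (not_lt.mpr hp.le)
  have hsub : S ∪ T ⊆ (Finset.univ : Finset (Fin g)).offDiag := by
    intro p hp
    rw [Finset.mem_union] at hp
    rcases hp with h | h <;> simp [hS, hT] at h <;>
      exact Finset.mem_offDiag.mpr ⟨Finset.mem_univ _, Finset.mem_univ _, by omega⟩
  have hle := Finset.card_le_card hsub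
  rw [Finset.card_union_of_disjoint hdisj, Finset.offDiag_card, Finset.card_univ,
    Fintype.card_fin] at hle
  have hgg : g ^ 2 = g * g := sq g
  omega

private lemma single_integral_bound (r : ℝ) (hr : 0 < r) :
    ∫ t in Set.Icc (0:ℝ) r, Real.sinh t ^ 2 ≤ Real.sinh r ^ 2 / 2 := by
  rw [MeasureTheory.integral_Icc_eq_integral_Ioc, ← intervalIntegral.integral_of_le hr.le]
  have hferm : ∫ t in (0:ℝ)..r, Real.sinh t * Real.cosh t = Real.sinh r ^ 2 / 2 := by
    have hderiv : ∀ t ∈ Set.uIcc (0:ℝ) r,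
        HasDerivAt (fun y => Real.sinh y ^ 2 / 2) (Real.sinh t * Real.cosh t) t := by
      intro t _
      have := ((Real.hasDerivAt_sinh t).pow 2).div_const 2
      simpa using this.congr_deriv (by ring)
    rw [intervalIntegral.integral_eq_sub_of_hasDerivAt hderiv
      ((Real.continuous_sinh.mul Real.continuous_cosh).intervalIntegrable 0 r)]
    simp [Real.sinh_zero]
  rw [← hferm]
  apply intervalIntegral.integral_mono_on hr.le
    ((Real.continuous_sinh.pow 2).intervalIntegrable 0 r)
    ((Real.continuous_sinh.mul Real.continuous_cosh).intervalIntegrable 0 r)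
  intro t ht
  have h1 : 0 ≤ Real.sinh t := Real.sinh_nonneg_iff.mpr ht.1
  have h2 : Real.sinh t ≤ Real.cosh t := (Real.sinh_lt_cosh t).le
  simp only [Pi.mul_apply, Pi.pow_apply]
  nlinarith

private lemma box_integral_eq (g : ℕ) (r : ℝ) :
    ∫ x : Fin g → ℝ in Set.univ.pi (fun _ => Set.Icc (0:ℝ) r), ∏ j, Real.sinh (x j) ^ 2
      = (∫ t in Set.Icc (0:ℝ) r, Real.sinh t ^ 2) ^ g := by
  have hbox : MeasurableSet (Set.univ.pi (fun _ : Fin g => Set.Icc (0:ℝ) r)) :=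
    MeasurableSet.univ_pi fun _ => measurableSet_Icc
  rw [← integral_indicator hbox]
  have hpt : (Set.univ.pi (fun _ : Fin g => Set.Icc (0:ℝ) r)).indicator
      (fun x => ∏ j, Real.sinh (x j) ^ 2)
      = fun x => ∏ j, (Set.Icc (0:ℝ) r).indicator (fun t => Real.sinh t ^ 2) (x j) := by
    funext x
    by_cases hx : x ∈ Set.univ.pi (fun _ : Fin g => Set.Icc (0:ℝ) r)
    · rw [Set.indicator_of_mem hx]
      exact Finset.prod_congr rfl fun j _ =>
        (Set.indicator_of_mem (hx j (Set.mem_univ j)) (fun t => Real.sinh t ^ 2)).symm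
    · rw [Set.indicator_of_notMem hx]
      rw [Set.mem_univ_pi] at hx
      push_neg at hx
      obtain ⟨j, hj⟩ := hx
      exact (Finset.prod_eq_zero (Finset.mem_univ j)
        (Set.indicator_of_notMem hj (fun t => Real.sinh t ^ 2))).symm
  rw [hpt, volume_pi]
  beta_reduce
  rw [integral_fintype_prod_eq_pow
    ((Set.Icc (0:ℝ) r).indicator (fun t => Real.sinh t ^ 2)),
    integral_indicator measurableSet_Icc, Fintype.card_fin]

/-- Proposition 2 (genus-g volume bound): for every integer `g ≥ 2` there is a constant
`C_g > 0`, depending only on `g`, such that for all `r > 0`,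
`2^g · ∫_{[0,r]^g} ∏_j sinh²(r_j) · ∏_{j<k} sinh²((r_j−r_k)/2)·sinh²((r_j+r_k)/2) dr`
is at most `C_g · (cosh r)^{g²−2} · (sinh r)^{g+2}`. -/
theorem stmt_1 (g : ℕ) (hg : 2 ≤ g) :
    ∃ C : ℝ, 0 < C ∧ ∀ r : ℝ, 0 < r →
      (2 : ℝ) ^ g *
        ∫ x : Fin g → ℝ in Set.univ.pi (fun _ => Set.Icc (0:ℝ) r),
          (∏ j, Real.sinh (x j) ^ 2) *
            ∏ p ∈ Finset.univ.filter (fun p : Fin g × Fin g => p.1 < p.2),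
              (Real.sinh ((x p.1 - x p.2) / 2) ^ 2 * Real.sinh ((x p.1 + x p.2) / 2) ^ 2)
      ≤ C * Real.cosh r ^ (g ^ 2 - 2) * Real.sinh r ^ (g + 2) := by
  refine ⟨1, one_pos, fun r hr => ?_⟩
  set s := Real.sinh r with hs_def
  set c := Real.cosh r with hc_def
  have hs : 0 < s := Real.sinh_pos_iff.mpr hr
  have hc1 : (1:ℝ) ≤ c := Real.one_le_cosh r
  have hc : (0:ℝ) < c := lt_of_lt_of_le one_pos hc1
  have hsc : s ≤ c := (Real.sinh_lt_cosh r).le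
  set PS := Finset.univ.filter (fun p : Fin g × Fin g => p.1 < p.2) with hPS
  set P := PS.card with hP
  set κ := s ^ 4 / (4 * c ^ 2) with hκ
  have hκ0 : 0 ≤ κ := by positivity
  set box := Set.univ.pi (fun _ : Fin g => Set.Icc (0:ℝ) r) with hbox_def
  have hbox : MeasurableSet box := MeasurableSet.univ_pi fun _ => measurableSet_Icc
  have hcompact : IsCompact box := isCompact_univ_pi fun _ => isCompact_Icc
  -- pointwise bound on the pair product
  have hpair : ∀ x ∈ box, ∀ p ∈ PS,
      Real.sinh ((x p.1 - x p.2) / 2) ^ 2 * Real.sinh ((x p.1 + x p.2) / 2) ^ 2 ≤ κ := by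
    intro x hx p _
    have hx1 := hx p.1 (Set.mem_univ _)
    have hx2 := hx p.2 (Set.mem_univ _)
    have hco : ∀ j : Fin g, x j ∈ Set.Icc (0:ℝ) r → 1 ≤ Real.cosh (x j) ∧ Real.cosh (x j) ≤ c := by
      intro j hj
      refine ⟨Real.one_le_cosh _, Real.cosh_le_cosh.mpr ?_⟩
      rw [abs_of_nonneg hj.1, abs_of_nonneg hr.le]
      exact hj.2
    obtain ⟨h11, h12⟩ := hco p.1 hx1
    obtain ⟨h21, h22⟩ := hco p.2 hx2
    have hid : Real.sinh ((x p.1 - x p.2) / 2) ^ 2 * Real.sinh ((x p.1 + x p.2) / 2) ^ 2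
        = ((Real.cosh (x p.1) - Real.cosh (x p.2)) / 2) ^ 2 := by
      rw [← mul_pow, sinh_half_mul_sinh_half]
    rw [hid]
    have hdiff : ((Real.cosh (x p.1) - Real.cosh (x p.2)) / 2) ^ 2 ≤ ((c - 1) / 2) ^ 2 := by
      apply sq_le_sq'
      · nlinarith
      · nlinarith
    refine le_trans hdiff ?_
    have hs2 : s ^ 2 = c ^ 2 - 1 := by
      rw [hs_def, hc_def, Real.sinh_sq]
    have hs4 : s ^ 4 = (c ^ 2 - 1) ^ 2 := by
      have : s ^ 4 = (s ^ 2) ^ 2 := by ring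
      rw [this, hs2]
    rw [div_pow, div_le_div_iff₀ (by norm_num) (by positivity), hs4]
    nlinarith [sq_nonneg (c - 1), hc1]
  -- continuity and integrability
  have hcontf : Continuous (fun x : Fin g → ℝ =>
      (∏ j, Real.sinh (x j) ^ 2) *
        ∏ p ∈ PS, (Real.sinh ((x p.1 - x p.2) / 2) ^ 2 *
          Real.sinh ((x p.1 + x p.2) / 2) ^ 2)) := by
    apply Continuous.mul
    · exact continuous_finset_prod _ fun j _ =>
        (Real.continuous_sinh.comp (continuous_apply j)).pow 2
    · apply continuous_finset_prod _ fun p _ => ?_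
      apply Continuous.mul
      · exact (Real.continuous_sinh.comp
          (((continuous_apply p.1).sub (continuous_apply p.2)).div_const 2)).pow 2
      · exact (Real.continuous_sinh.comp
          (((continuous_apply p.1).add (continuous_apply p.2)).div_const 2)).pow 2
  have hconth : Continuous (fun x : Fin g → ℝ => (∏ j, Real.sinh (x j) ^ 2) * κ ^ P) :=
    (continuous_finset_prod _ fun j _ =>
      (Real.continuous_sinh.comp (continuous_apply j)).pow 2).mul continuous_const
  have hintf : IntegrableOn (fun x : Fin g → ℝ =>
      (∏ j, Real.sinh (x j) ^ 2) *
        ∏ p ∈ PS, (Real.sinh ((x p.1 - x p.2) / 2) ^ 2 *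
          Real.sinh ((x p.1 + x p.2) / 2) ^ 2)) box :=
    hcontf.continuousOn.integrableOn_compact hcompact
  have hinth : IntegrableOn (fun x : Fin g → ℝ => (∏ j, Real.sinh (x j) ^ 2) * κ ^ P) box :=
    hconth.continuousOn.integrableOn_compact hcompact
  -- step 1 : compare the integrands
  have step1 : ∫ x : Fin g → ℝ in box,
      (∏ j, Real.sinh (x j) ^ 2) *
        ∏ p ∈ PS, (Real.sinh ((x p.1 - x p.2) / 2) ^ 2 *
          Real.sinh ((x p.1 + x p.2) / 2) ^ 2)
      ≤ ∫ x : Fin g → ℝ in box, (∏ j, Real.sinh (x j) ^ 2) * κ ^ P := by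
    apply setIntegral_mono_on hintf hinth hbox
    intro x hx
    apply mul_le_mul_of_nonneg_left _ (Finset.prod_nonneg fun j _ => sq_nonneg _)
    calc ∏ p ∈ PS, (Real.sinh ((x p.1 - x p.2) / 2) ^ 2 *
          Real.sinh ((x p.1 + x p.2) / 2) ^ 2)
        ≤ ∏ _p ∈ PS, κ := Finset.prod_le_prod
          (fun p _ => mul_nonneg (sq_nonneg _) (sq_nonneg _))
          (fun p hp => hpair x hx p hp)
      _ = κ ^ P := Finset.prod_const κ
  -- step 2 : compute the remaining integral
  have hJnn : 0 ≤ ∫ t in Set.Icc (0:ℝ) r, Real.sinh t ^ 2 :=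
    setIntegral_nonneg measurableSet_Icc fun t _ => sq_nonneg _
  have step2 : ∫ x : Fin g → ℝ in box, (∏ j, Real.sinh (x j) ^ 2) * κ ^ P
      ≤ (s ^ 2 / 2) ^ g * κ ^ P := by
    rw [integral_mul_const, box_integral_eq g r]
    apply mul_le_mul_of_nonneg_right _ (pow_nonneg hκ0 P)
    exact pow_le_pow_left₀ hJnn (single_integral_bound r hr) g
  -- step 3 : elementary estimate
  have h2P : 2 * P ≤ g ^ 2 - g := two_mul_card_pairs_le g
  have step3 : (2:ℝ) ^ g * ((s ^ 2 / 2) ^ g * κ ^ P)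
      ≤ 1 * c ^ (g ^ 2 - 2) * s ^ (g + 2) := by
    have heq : (2:ℝ) ^ g * ((s ^ 2 / 2) ^ g * κ ^ P)
        = s ^ (2 * g + 4 * P) / ((4:ℝ) ^ P * c ^ (2 * P)) := by
      rw [hκ, div_pow, div_pow, mul_pow, ← pow_mul, ← pow_mul, ← pow_mul]
      field_simp
      ring
    rw [heq, one_mul, div_le_iff₀ (by positivity)]
    have hsplit : 2 * g + 4 * P = (g + 2) + (g + 4 * P - 2) := by omega
    have hexp : g + 4 * P - 2 ≤ 2 * P + (g ^ 2 - 2) := by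
      have : g ≤ g ^ 2 := by nlinarith
      omega
    calc s ^ (2 * g + 4 * P) = s ^ (g + 2) * s ^ (g + 4 * P - 2) := by
          rw [hsplit, pow_add]
      _ ≤ s ^ (g + 2) * c ^ (g + 4 * P - 2) :=
          mul_le_mul_of_nonneg_left (pow_le_pow_left₀ hs.le hsc _) (pow_nonneg hs.le _)
      _ ≤ s ^ (g + 2) * c ^ (2 * P + (g ^ 2 - 2)) :=
          mul_le_mul_of_nonneg_left (pow_le_pow_right₀ hc1 hexp) (pow_nonneg hs.le _)
      _ = c ^ (g ^ 2 - 2) * s ^ (g + 2) * c ^ (2 * P) := by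
          rw [pow_add]; ring
      _ ≤ c ^ (g ^ 2 - 2) * s ^ (g + 2) * ((4:ℝ) ^ P * c ^ (2 * P)) := by
          have h1 : (1:ℝ) ≤ (4:ℝ) ^ P := one_le_pow₀ (by norm_num)
          have h2 : (0:ℝ) ≤ c ^ (2 * P) := pow_nonneg hc.le _
          have h3 : (0:ℝ) ≤ c ^ (g ^ 2 - 2) * s ^ (g + 2) := by positivity
          exact mul_le_mul_of_nonneg_left (le_mul_of_one_le_left h2 h1) h3
    -- rearrange
  calc (2 : ℝ) ^ g * ∫ x : Fin g → ℝ in box,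
        (∏ j, Real.sinh (x j) ^ 2) *
          ∏ p ∈ PS, (Real.sinh ((x p.1 - x p.2) / 2) ^ 2 *
            Real.sinh ((x p.1 + x p.2) / 2) ^ 2)
      ≤ (2:ℝ) ^ g * ((s ^ 2 / 2) ^ g * κ ^ P) := by
        apply mul_le_mul_of_nonneg_left _ (by positivity)
        exact le_trans step1 step2
    _ ≤ 1 * c ^ (g ^ 2 - 2) * s ^ (g + 2) := step3
end

section
/- Let (X, d) be a metric space equipped with a Borel measure μ, let r > 0, v > 0, K > 0, and let G ≥ 1 be a real number. Then there exists a constant C > 0, depending only on K, v, r and G, with the following property: for every Z ∈ X, every nonempty countable set S ⊆ X that is 2r-separated (any two distinct points of S are at distance at least 2r from each other) and satisfies μ(B(s, r)) ≥ v for every s ∈ S and μ(B(Z, t)) ≤ K·cosh^G(t/(2√2)) for every t > 0, and every real number n ≥ G + 1, one has ∑_{s ∈ S} cosh(d(Z, s)/(2√2))^{−n} ≤ C·cosh(d₀/(2√2))^{−(n−G)}, where d₀ := inf_{s ∈ S} d(Z, s) and B(x, t) denotes the open ball of radius t centered at x. -/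
open MeasureTheory Metric ENNReal

lemma my_cosh_le_exp {x : ℝ} (hx : 0 ≤ x) : Real.cosh x ≤ Real.exp x := by
  rw [Real.cosh_eq]
  have h : Real.exp (-x) ≤ Real.exp x := Real.exp_le_exp.2 (by linarith)
  linarith

lemma my_exp_le_two_cosh (x : ℝ) : Real.exp x ≤ 2 * Real.cosh x := by
  rw [Real.cosh_eq]
  have h := Real.exp_pos (-x)
  linarith

lemma my_cosh_mul {x y : ℝ} (hx : 0 ≤ x) (hy : 0 ≤ y) :
    Real.cosh x * Real.cosh y ≤ Real.cosh (x + y) := by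
  rw [Real.cosh_add]
  nlinarith [Real.sinh_nonneg_iff.2 hx, Real.sinh_nonneg_iff.2 hy]

lemma my_cosh_mono {x y : ℝ} (hx : 0 ≤ x) (hxy : x ≤ y) :
    Real.cosh x ≤ Real.cosh y := by
  rw [Real.cosh_le_cosh, abs_of_nonneg hx, abs_of_nonneg (hx.trans hxy)]
  exact hxy

/-- The core real-analysis estimate per annulus. -/
lemma my_core {c r a x G n : ℝ} (hc : 0 < c) (hr : 0 ≤ r) (ha : 0 ≤ a) (hx : 0 ≤ x)
    (hG : 1 ≤ G) (hn : G + 1 ≤ n) :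
    Real.cosh ((a + x + 1 + r) / c) ^ G * Real.cosh ((a + x) / c) ^ (-n) ≤
      (2 * Real.exp ((1 + r) / c)) ^ G * 2 * Real.cosh (a / c) ^ (G - n) *
        Real.exp (-(x / c)) := by
  set u : ℝ := (a + x) / c with hu
  set w : ℝ := (1 + r) / c with hw
  have hu0 : 0 ≤ u := by positivity
  have hw0 : 0 ≤ w := by positivity
  have hB1 : 1 ≤ Real.cosh u := Real.one_le_cosh u
  have hB0 : 0 < Real.cosh u := by linarith
  have hGn : G - n ≤ -1 := by linarith
  have hApos : (0:ℝ) < Real.cosh ((a + x + 1 + r) / c) := Real.cosh_pos _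
  -- split the exponent
  have hsplit : Real.cosh u ^ (-n) = Real.cosh u ^ (-G) * Real.cosh u ^ (G - n) := by
    rw [← Real.rpow_add hB0]; ring_nf
  -- ratio bound
  have hratio : Real.cosh ((a + x + 1 + r) / c) ≤ 2 * Real.exp w * Real.cosh u := by
    have heq : (a + x + 1 + r) / c = u + w := by rw [hu, hw, ← add_div]; ring_nf
    rw [heq]
    calc Real.cosh (u + w) ≤ Real.exp (u + w) := my_cosh_le_exp (by linarith)
      _ = Real.exp u * Real.exp w := Real.exp_add u w
      _ ≤ (2 * Real.cosh u) * Real.exp w :=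
          mul_le_mul_of_nonneg_right (my_exp_le_two_cosh u) (Real.exp_pos w).le
      _ = 2 * Real.exp w * Real.cosh u := by ring
  have h1 : Real.cosh ((a + x + 1 + r) / c) ^ G * Real.cosh u ^ (-G) ≤
      (2 * Real.exp w) ^ G := by
    rw [Real.rpow_neg hB0.le, ← div_eq_mul_inv, ← Real.div_rpow hApos.le hB0.le]
    apply Real.rpow_le_rpow (by positivity) _ (by linarith)
    rw [div_le_iff₀ hB0]
    exact hratio
  -- product lower bound for cosh u
  have h2 : Real.cosh u ^ (G - n) ≤
      Real.cosh (a / c) ^ (G - n) * Real.cosh (x / c) ^ (G - n) := by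
    have hprod : Real.cosh (a / c) * Real.cosh (x / c) ≤ Real.cosh u := by
      have : u = a / c + x / c := by rw [hu, ← add_div]
      rw [this]
      exact my_cosh_mul (by positivity) (by positivity)
    calc Real.cosh u ^ (G - n) ≤ (Real.cosh (a / c) * Real.cosh (x / c)) ^ (G - n) :=
          Real.rpow_le_rpow_of_nonpos (by positivity) hprod (by linarith)
      _ = Real.cosh (a / c) ^ (G - n) * Real.cosh (x / c) ^ (G - n) :=
          Real.mul_rpow (Real.cosh_pos _).le (Real.cosh_pos _).le
  have h3 : Real.cosh (x / c) ^ (G - n) ≤ 2 * Real.exp (-(x / c)) := by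
    calc Real.cosh (x / c) ^ (G - n) ≤ Real.cosh (x / c) ^ (-1 : ℝ) :=
          Real.rpow_le_rpow_of_exponent_le (Real.one_le_cosh _) (by linarith)
      _ = (Real.cosh (x / c))⁻¹ := Real.rpow_neg_one _
      _ ≤ 2 * Real.exp (-(x / c)) := by
          rw [Real.exp_neg]
          rw [inv_le_iff_one_le_mul₀ (Real.cosh_pos _)]
          have := my_exp_le_two_cosh (x / c)
          calc (1:ℝ) = Real.exp (x/c) * (Real.exp (x/c))⁻¹ := by
                rw [mul_inv_cancel₀ (Real.exp_pos _).ne']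
            _ ≤ 2 * Real.cosh (x/c) * (Real.exp (x/c))⁻¹ :=
                mul_le_mul_of_nonneg_right this (by positivity)
            _ = 2 * (Real.exp (x/c))⁻¹ * Real.cosh (x/c) := by ring
  calc Real.cosh ((a + x + 1 + r) / c) ^ G * Real.cosh u ^ (-n)
      = (Real.cosh ((a + x + 1 + r) / c) ^ G * Real.cosh u ^ (-G)) *
        Real.cosh u ^ (G - n) := by rw [hsplit]; ring
    _ ≤ (2 * Real.exp w) ^ G *
        (Real.cosh (a / c) ^ (G - n) * Real.cosh (x / c) ^ (G - n)) := by
        apply mul_le_mul h1 h2 (Real.rpow_nonneg (Real.cosh_pos _).le _) (by positivity)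
    _ ≤ (2 * Real.exp w) ^ G *
        (Real.cosh (a / c) ^ (G - n) * (2 * Real.exp (-(x / c)))) := by
        apply mul_le_mul_of_nonneg_left _ (by positivity)
        exact mul_le_mul_of_nonneg_left h3 (Real.rpow_nonneg (Real.cosh_pos _).le _)
    _ = (2 * Real.exp w) ^ G * 2 * Real.cosh (a / c) ^ (G - n) * Real.exp (-(x / c)) := by
        ring


/-- Counting lemma: a `2r`-separated set with balls of measure `≥ v` has at most `B / v`
points within distance `t` of `Z`, provided `μ (ball Z (t+r)) ≤ B`. -/
lemma my_counting {X : Type*} [MetricSpace X] [MeasurableSpace X] [BorelSpace X]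
    (μ : Measure X) (r v : ℝ) (hv : 0 < v) (Z : X) (S : Set X)
    (hsep : ∀ s ∈ S, ∀ t ∈ S, s ≠ t → 2 * r ≤ dist s t)
    (hball : ∀ s ∈ S, ENNReal.ofReal v ≤ μ (ball s r))
    (t B : ℝ) (hB0 : 0 ≤ B) (hB : μ (ball Z (t + r)) ≤ ENNReal.ofReal B) :
    {s : S | dist Z (s : X) < t}.Finite ∧
      ∀ F : Finset S, (∀ s ∈ F, dist Z (s : X) < t) → (F.card : ℝ) * v ≤ B := by
  have hcard : ∀ F : Finset S, (∀ s ∈ F, dist Z (s : X) < t) → (F.card : ℝ) * v ≤ B := by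
    intro F hF
    have hdisj : (F : Set S).PairwiseDisjoint (fun s : S => ball (s : X) r) := by
      intro s _ u _ hsu
      apply Metric.ball_disjoint_ball
      have hne : (s : X) ≠ (u : X) := fun h => hsu (Subtype.ext h)
      calc r + r = 2 * r := by ring
        _ ≤ dist (s : X) (u : X) := hsep s s.2 u u.2 hne
    have hsub : ∀ s ∈ F, ball (s : X) r ⊆ ball Z (t + r) := by
      intro s hs x hx
      rw [mem_ball] at hx ⊢
      have h1 : dist Z (s : X) < t := hF s hs
      have h2 : dist x Z ≤ dist x (s : X) + dist (s : X) Z := dist_triangle _ _ _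
      have h3 : dist (s : X) Z = dist Z (s : X) := dist_comm _ _
      linarith
    have hkey : (F.card : ℝ≥0∞) * ENNReal.ofReal v ≤ μ (ball Z (t + r)) := by
      calc (F.card : ℝ≥0∞) * ENNReal.ofReal v = ∑ _s ∈ F, ENNReal.ofReal v := by
            rw [Finset.sum_const, nsmul_eq_mul]
        _ ≤ ∑ s ∈ F, μ (ball (s : X) r) :=
            Finset.sum_le_sum fun s _ => hball s s.2
        _ = μ (⋃ s ∈ F, ball (s : X) r) :=
            (measure_biUnion_finset hdisj fun s _ => measurableSet_ball).symm
        _ ≤ μ (ball Z (t + r)) := measure_mono (Set.iUnion₂_subset hsub)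
    have h4 : ENNReal.ofReal ((F.card : ℝ) * v) ≤ ENNReal.ofReal B := by
      rw [ENNReal.ofReal_mul (by positivity), ENNReal.ofReal_natCast]
      exact hkey.trans hB
    exact (ENNReal.ofReal_le_ofReal_iff hB0).1 h4
  refine ⟨?_, hcard⟩
  by_contra hinf
  rw [← Set.not_infinite, not_not] at hinf
  obtain ⟨F, hFsub, hFcard⟩ := hinf.exists_subset_card_eq (⌊B / v⌋₊ + 1)
  have h1 : (F.card : ℝ) * v ≤ B := by
    apply hcard
    intro s hs
    exact hFsub hs
  rw [hFcard] at h1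
  have h2 : B / v < (⌊B / v⌋₊ : ℝ) + 1 := Nat.lt_floor_add_one _
  have h3 : B < ((⌊B / v⌋₊ : ℝ) + 1) * v := by
    rw [← div_lt_iff₀ hv] at *
    linarith
  push_cast at h1
  linarith


/-- Metric-measure abstraction of the main summation estimate: if `S` is a nonempty
countable `2r`-separated set whose points carry balls of measure at least `v`, and balls
around `Z` satisfy the growth bound `μ(B(Z,t)) ≤ K·cosh^G(t/(2√2))`, then for every
`n ≥ G + 1` we have `∑_{s ∈ S} cosh(d(Z,s)/(2√2))^{−n} ≤ C·cosh(d₀/(2√2))^{−(n−G)}`,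
where `d₀ = inf_{s ∈ S} d(Z,s)` and `C` depends only on `K, v, r, G`. -/
theorem stmt_3 {X : Type*} [MetricSpace X] [MeasurableSpace X] [BorelSpace X]
    (μ : Measure X) (r v K G : ℝ) (hr : 0 < r) (hv : 0 < v) (hK : 0 < K) (hG : 1 ≤ G) :
    ∃ C : ℝ, 0 < C ∧
      ∀ (Z : X) (S : Set X), S.Nonempty → S.Countable →
        (∀ s ∈ S, ∀ t ∈ S, s ≠ t → 2 * r ≤ dist s t) →
        (∀ s ∈ S, ENNReal.ofReal v ≤ μ (ball s r)) →
        (∀ t : ℝ, 0 < t →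
          μ (ball Z t) ≤ ENNReal.ofReal (K * Real.cosh (t / (2 * Real.sqrt 2)) ^ G)) →
        ∀ n : ℝ, G + 1 ≤ n →
          (∑' s : S, Real.cosh (dist Z (s : X) / (2 * Real.sqrt 2)) ^ (-n))
            ≤ C * Real.cosh ((⨅ s : S, dist Z (s : X)) / (2 * Real.sqrt 2)) ^ (-(n - G)) := by
  have hs2 : (0:ℝ) < Real.sqrt 2 := Real.sqrt_pos.2 (by norm_num)
  set c : ℝ := 2 * Real.sqrt 2 with hcdef
  have hc : 0 < c := by positivity
  set q : ℝ := Real.exp (-(1 / c)) with hqdef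
  have hq0 : 0 < q := Real.exp_pos _
  have hq1 : q < 1 := by
    rw [hqdef]
    apply Real.exp_lt_one_iff.2
    simp [hc]
  have h1q : 0 < 1 - q := by linarith
  set M : ℝ := (2 * Real.exp ((1 + r) / c)) ^ G with hMdef
  have hM0 : 0 < M := Real.rpow_pos_of_pos (by positivity) _
  refine ⟨K / v * M * 2 * (1 - q)⁻¹, by positivity, ?_⟩
  intro Z S hne _hcount hsep hball hgrowth n hn
  haveI : Nonempty S := hne.to_subtype
  have hGnn : (0:ℝ) ≤ G := by linarith
  set d0 : ℝ := ⨅ s : S, dist Z (s : X) with hd0def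
  have hbdd : BddBelow (Set.range fun s : S => dist Z (s : X)) :=
    ⟨0, by rintro _ ⟨s, rfl⟩; exact dist_nonneg⟩
  have hd0 : 0 ≤ d0 := le_ciInf fun s => dist_nonneg
  have hd0le : ∀ s : S, d0 ≤ dist Z (s : X) := fun s => ciInf_le hbdd s
  -- counting per annulus
  have hcnt : ∀ m : ℕ, {s : S | dist Z (s : X) < d0 + m + 1}.Finite ∧
      ∀ F : Finset S, (∀ s ∈ F, dist Z (s : X) < d0 + m + 1) →
        (F.card : ℝ) * v ≤ K * Real.cosh ((d0 + m + 1 + r) / c) ^ G := by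
    intro m
    apply my_counting μ r v hv Z S hsep hball (d0 + m + 1) _
      (by positivity)
    exact hgrowth _ (by positivity)
  set Fs : ℕ → Finset S := fun m => (hcnt m).1.toFinset with hFs
  set π : S → ℕ := fun s => ⌊dist Z (s : X) - d0⌋₊ with hπ
  have hπmem : ∀ s : S, s ∈ Fs (π s) := by
    intro s
    rw [hFs]
    simp only [Set.Finite.mem_toFinset, Set.mem_setOf_eq]
    have := Nat.lt_floor_add_one (dist Z (s : X) - d0)
    push_cast at this ⊢
    rw [hπ]
    linarith [this]
  have hπge : ∀ s : S, d0 + (π s : ℝ) ≤ dist Z (s : X) := by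
    intro s
    have h0 : (0:ℝ) ≤ dist Z (s : X) - d0 := sub_nonneg.2 (hd0le s)
    have := Nat.floor_le h0
    rw [hπ]
    linarith [this]
  set g : S → ℝ≥0∞ := fun s => ENNReal.ofReal (Real.cosh (dist Z (s : X) / c) ^ (-n))
    with hg
  -- decomposition into annuli
  have hdecomp : (∑' s : S, g s) = ∑' m : ℕ, ∑' s : S, if π s = m then g s else 0 := by
    rw [ENNReal.tsum_comm]
    refine tsum_congr fun s => ?_
    rw [tsum_eq_single (π s) fun m hm => if_neg fun h => hm h.symm]
    exact (if_pos rfl).symm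
  -- per-annulus estimate
  have hterm : ∀ m : ℕ,
      (∑' s : S, if π s = m then g s else 0) ≤
        ENNReal.ofReal (K / v * M * 2 * Real.cosh (d0 / c) ^ (G - n) * q ^ m) := by
    intro m
    have hstep1 : (∑' s : S, if π s = m then g s else 0) =
        ∑ s ∈ Fs m, if π s = m then g s else 0 := by
      apply tsum_eq_sum
      intro s hs
      exact if_neg fun h => hs (by rw [← h]; exact hπmem s)
    have hstep2 : ∀ s ∈ Fs m, (if π s = m then g s else 0) ≤
        ENNReal.ofReal (Real.cosh ((d0 + m) / c) ^ (-n)) := by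
      intro s _
      split
      · rename_i hsm
        apply ENNReal.ofReal_le_ofReal
        have hge : d0 + (m : ℝ) ≤ dist Z (s : X) := by
          have := hπge s; rw [hsm] at this; exact this
        apply Real.rpow_le_rpow_of_nonpos (Real.cosh_pos _) _ (by linarith)
        apply my_cosh_mono (by positivity)
        gcongr
      · exact zero_le
    -- real-number estimate
    have hcard : ((Fs m).card : ℝ) ≤ K / v * Real.cosh ((d0 + m + 1 + r) / c) ^ G := by
      have h := (hcnt m).2 (Fs m) (by
        intro s hs
        rw [hFs] at hs
        simpa using (Set.Finite.mem_toFinset _).1 hs)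
      have h2 : ((Fs m).card : ℝ) ≤ K * Real.cosh ((d0 + m + 1 + r) / c) ^ G / v :=
        (le_div_iff₀ hv).2 h
      calc ((Fs m).card : ℝ) ≤ K * Real.cosh ((d0 + m + 1 + r) / c) ^ G / v := h2
        _ = K / v * Real.cosh ((d0 + m + 1 + r) / c) ^ G := by ring
    have hreal : ((Fs m).card : ℝ) * Real.cosh ((d0 + m) / c) ^ (-n) ≤
        K / v * M * 2 * Real.cosh (d0 / c) ^ (G - n) * q ^ m := by
      have hqm : q ^ m = Real.exp (-((m : ℝ) / c)) := by
        rw [hqdef, ← Real.exp_nat_mul]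
        congr 1
        field_simp
      have hcore := my_core (r := r) (a := d0) (x := (m : ℝ)) (G := G) (n := n)
        hc hr.le hd0 (Nat.cast_nonneg m) hG hn
      have hrpow_nonneg : (0:ℝ) ≤ Real.cosh ((d0 + m) / c) ^ (-n) :=
        Real.rpow_nonneg (Real.cosh_pos _).le _
      calc ((Fs m).card : ℝ) * Real.cosh ((d0 + m) / c) ^ (-n)
          ≤ (K / v * Real.cosh ((d0 + m + 1 + r) / c) ^ G) *
            Real.cosh ((d0 + m) / c) ^ (-n) :=
            mul_le_mul_of_nonneg_right hcard hrpow_nonneg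
        _ = K / v * (Real.cosh ((d0 + m + 1 + r) / c) ^ G *
            Real.cosh ((d0 + m) / c) ^ (-n)) := by ring
        _ ≤ K / v * (M * 2 * Real.cosh (d0 / c) ^ (G - n) *
            Real.exp (-((m : ℝ) / c))) := by
            apply mul_le_mul_of_nonneg_left _ (by positivity)
            rw [hMdef]
            exact hcore
        _ = K / v * M * 2 * Real.cosh (d0 / c) ^ (G - n) * q ^ m := by
            rw [hqm]; ring
    calc (∑' s : S, if π s = m then g s else 0)
        = ∑ s ∈ Fs m, if π s = m then g s else 0 := hstep1
      _ ≤ (Fs m).card • ENNReal.ofReal (Real.cosh ((d0 + m) / c) ^ (-n)) :=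
          Finset.sum_le_card_nsmul _ _ _ hstep2
      _ = ((Fs m).card : ℝ≥0∞) * ENNReal.ofReal (Real.cosh ((d0 + m) / c) ^ (-n)) := by
          rw [nsmul_eq_mul]
      _ = ENNReal.ofReal (((Fs m).card : ℝ) * Real.cosh ((d0 + m) / c) ^ (-n)) := by
          rw [ENNReal.ofReal_mul (Nat.cast_nonneg _), ENNReal.ofReal_natCast]
      _ ≤ ENNReal.ofReal (K / v * M * 2 * Real.cosh (d0 / c) ^ (G - n) * q ^ m) :=
          ENNReal.ofReal_le_ofReal hreal
  -- summing the geometric series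
  set R : ℝ := K / v * M * 2 * (1 - q)⁻¹ * Real.cosh (d0 / c) ^ (-(n - G)) with hRdef
  have hXnn : (0:ℝ) ≤ Real.cosh (d0 / c) ^ (G - n) := Real.rpow_nonneg (Real.cosh_pos _).le _
  have hR0 : 0 ≤ R := by
    rw [hRdef]
    have : (0:ℝ) ≤ Real.cosh (d0 / c) ^ (-(n - G)) := Real.rpow_nonneg (Real.cosh_pos _).le _
    positivity
  have hgeo : (∑' m : ℕ, ENNReal.ofReal
      (K / v * M * 2 * Real.cosh (d0 / c) ^ (G - n) * q ^ m)) ≤ ENNReal.ofReal R := by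
    set A : ℝ := K / v * M * 2 * Real.cosh (d0 / c) ^ (G - n) with hA
    have hA0 : 0 ≤ A := by positivity
    have hsummable : Summable fun m : ℕ => A * q ^ m :=
      (summable_geometric_of_lt_one hq0.le hq1).mul_left A
    have h1 : (∑' m : ℕ, ENNReal.ofReal (A * q ^ m)) =
        ENNReal.ofReal (∑' m : ℕ, A * q ^ m) :=
      (ENNReal.ofReal_tsum_of_nonneg (fun m => by positivity) hsummable).symm
    rw [h1]
    apply ENNReal.ofReal_le_ofReal
    rw [tsum_mul_left, tsum_geometric_of_lt_one hq0.le hq1]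
    rw [hRdef, hA]
    have hexp : -(n - G) = G - n := by ring
    rw [hexp]
    ring_nf
    exact le_refl _
  have htotal : (∑' s : S, g s) ≤ ENNReal.ofReal R := by
    rw [hdecomp]
    exact le_trans (ENNReal.tsum_le_tsum hterm) hgeo
  -- back to the reals
  have hfnn : ∀ s : S, (0:ℝ) ≤ Real.cosh (dist Z (s : X) / c) ^ (-n) :=
    fun s => Real.rpow_nonneg (Real.cosh_pos _).le _
  have hne_top : (∑' s : S, g s) ≠ ⊤ :=
    ne_top_of_le_ne_top ENNReal.ofReal_ne_top htotal
  have hsummable : Summable fun s : S => Real.cosh (dist Z (s : X) / c) ^ (-n) := by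
    have h := ENNReal.summable_toReal hne_top
    refine h.congr fun s => ?_
    rw [hg]
    exact ENNReal.toReal_ofReal (hfnn s)
  have hofReal : ENNReal.ofReal (∑' s : S, Real.cosh (dist Z (s : X) / c) ^ (-n)) =
      ∑' s : S, g s :=
    ENNReal.ofReal_tsum_of_nonneg hfnn hsummable
  have hfinal : (∑' s : S, Real.cosh (dist Z (s : X) / c) ^ (-n)) ≤ R := by
    refine (ENNReal.ofReal_le_ofReal_iff hR0).1 ?_
    rw [hofReal]
    exact htotal
  calc (∑' s : S, Real.cosh (dist Z (s : X) / c) ^ (-n)) ≤ R := hfinal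
    _ = K / v * M * 2 * (1 - q)⁻¹ * Real.cosh (d0 / c) ^ (-(n - G)) := hRdef
end

section
/- Let m be a natural number, let r > 0 be a real number, and let c₁, …, c_m be nonnegative real numbers. Then ∫₀^r sinh²(t)·∏_{j=1}^{m}(cosh²(t) + c_j) dt ≤ ∑_{k=0}^{m} e_{m−k}(c₁,…,c_m)·( sinh³(r)·cosh^{2k}(r)/cosh(r) + sinh(r)·cosh(r) ), where e_i denotes the i-th elementary symmetric polynomial in c₁, …, c_m (with e₀ = 1). -/
open Real Finset

lemma key_integral (k : ℕ) {r : ℝ} (hr : 0 < r) :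
    (∫ t in (0:ℝ)..r, Real.sinh t ^ 2 * Real.cosh t ^ (2 * k))
      ≤ Real.sinh r ^ 3 * Real.cosh r ^ (2 * k) / Real.cosh r + Real.sinh r * Real.cosh r := by
  set D : ℝ → ℝ := fun t =>
    (((3:ℕ) * Real.sinh t ^ (3-1) * Real.cosh t * Real.cosh t ^ (2*k)
        + Real.sinh t ^ 3 * ((2*k : ℕ) * Real.cosh t ^ (2*k-1) * Real.sinh t)) * Real.cosh t
      - Real.sinh t ^ 3 * Real.cosh t ^ (2*k) * Real.sinh t) / Real.cosh t ^ 2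
    + (Real.cosh t * Real.cosh t + Real.sinh t * Real.sinh t) with hD
  have hF : ∀ t : ℝ, HasDerivAt
      (fun t => Real.sinh t ^ 3 * Real.cosh t ^ (2*k) / Real.cosh t + Real.sinh t * Real.cosh t)
      (D t) t := by
    intro t
    exact ((((Real.hasDerivAt_sinh t).pow 3).mul ((Real.hasDerivAt_cosh t).pow (2*k))).div
      (Real.hasDerivAt_cosh t) (Real.cosh_pos t).ne').add
      ((Real.hasDerivAt_sinh t).mul (Real.hasDerivAt_cosh t))
  have hDc : Continuous D := by
    apply Continuous.add
    · apply Continuous.div (by continuity) (by continuity)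
      intro x
      exact pow_ne_zero _ (Real.cosh_pos x).ne'
    · continuity
  have heq : (∫ t in (0:ℝ)..r, D t)
      = Real.sinh r ^ 3 * Real.cosh r ^ (2*k) / Real.cosh r + Real.sinh r * Real.cosh r := by
    rw [intervalIntegral.integral_eq_sub_of_hasDerivAt (fun t _ => hF t)
      (hDc.intervalIntegrable 0 r)]
    simp
  rw [← heq]
  apply intervalIntegral.integral_mono_on hr.le
    (Continuous.intervalIntegrable (by continuity) 0 r)
    (hDc.intervalIntegrable 0 r)
  intro t ht
  have hC : (1:ℝ) ≤ Real.cosh t := Real.one_le_cosh t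
  have hid : Real.cosh t ^ 2 - Real.sinh t ^ 2 = 1 := Real.cosh_sq_sub_sinh_sq t
  have hC2 : (0:ℝ) < Real.cosh t ^ 2 := by positivity
  have h2 : (0:ℝ) ≤ Real.cosh t ^ (2*k) := by positivity
  have h1 : Real.sinh t ^ 4 ≤ Real.sinh t ^ 2 * Real.cosh t ^ 2 := by
    nlinarith [sq_nonneg (Real.sinh t)]
  have h3 : (0:ℝ) ≤ ((2*k : ℕ) : ℝ) * Real.cosh t ^ (2*k-1) * Real.sinh t ^ 4 * Real.cosh t := by
    have : (0:ℝ) ≤ Real.cosh t ^ (2*k-1) := by positivity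
    positivity
  have m1 : (0:ℝ) ≤ Real.cosh t ^ (2*k) * (Real.sinh t ^2 * Real.cosh t ^2 - Real.sinh t ^4) :=
    mul_nonneg h2 (by linarith)
  have m2 : (0:ℝ) ≤ Real.cosh t ^ (2*k) * (Real.sinh t ^2 * Real.cosh t ^2) := by positivity
  rw [hD]; beta_reduce
  rw [div_add' _ _ _ hC2.ne', le_div_iff₀ hC2]
  push_cast at h3 ⊢
  nlinarith [m1, m2, h3, mul_nonneg (sq_nonneg (Real.sinh t)) (sq_nonneg (Real.cosh t)),
    pow_pos (Real.cosh_pos t) 4]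

lemma expand_prod (m : ℕ) (c : Fin m → ℝ) (x : ℝ) :
    (∏ j, (x + c j)) = ∑ k ∈ Finset.range (m + 1),
      (∑ T ∈ (Finset.univ : Finset (Fin m)).powersetCard (m - k), ∏ j ∈ T, c j) * x ^ k := by
  have h := Multiset.prod_X_add_C_eq_sum_esymm ((Finset.univ.val : Multiset (Fin m)).map c)
  have hcard : Multiset.card ((Finset.univ.val : Multiset (Fin m)).map c) = m := by simp
  rw [hcard] at h
  have h2 := congrArg (Polynomial.eval x) h
  rw [Polynomial.eval_multiset_prod, Polynomial.eval_finset_sum] at h2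
  simp only [Multiset.map_map, Function.comp, Polynomial.eval_add, Polynomial.eval_X,
    Polynomial.eval_C, Polynomial.eval_mul, Polynomial.eval_pow] at h2
  have hL : (Multiset.map (fun j => x + c j) Finset.univ.val).prod = ∏ j, (x + c j) := by
    rw [Finset.prod]
  rw [hL] at h2
  rw [h2, ← Finset.sum_range_reflect]
  apply Finset.sum_congr rfl
  intro k hk
  have hk' : k ≤ m := by
    simpa [Nat.lt_succ_iff] using Finset.mem_range.mp hk
  rw [Nat.add_sub_cancel, Nat.sub_sub_self hk']
  congr 1
  rw [← Finset.esymm_map_val]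

/-- The inner-integral estimate in the inductive proof of Proposition 2:
`∫₀^r sinh²(t)·∏_j(cosh²(t) + c_j) dt ≤ ∑_{k=0}^m e_{m−k}(c)·(sinh³(r)·cosh^{2k}(r)/cosh(r) + sinh(r)·cosh(r))`,
where `e_i` is the `i`-th elementary symmetric polynomial of the nonnegative reals `c_j`. -/
theorem stmt_4 (m : ℕ) (r : ℝ) (hr : 0 < r) (c : Fin m → ℝ) (hc : ∀ j, 0 ≤ c j) :
    (∫ t in (0:ℝ)..r, Real.sinh t ^ 2 * ∏ j, (Real.cosh t ^ 2 + c j))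
      ≤ ∑ k ∈ Finset.range (m + 1),
          (∑ T ∈ (Finset.univ : Finset (Fin m)).powersetCard (m - k), ∏ j ∈ T, c j) *
            (Real.sinh r ^ 3 * Real.cosh r ^ (2 * k) / Real.cosh r
              + Real.sinh r * Real.cosh r) := by
  have hrw : ∀ t : ℝ, Real.sinh t ^ 2 * ∏ j, (Real.cosh t ^ 2 + c j)
      = ∑ k ∈ Finset.range (m + 1),
          (∑ T ∈ (Finset.univ : Finset (Fin m)).powersetCard (m - k), ∏ j ∈ T, c j) *
            (Real.sinh t ^ 2 * Real.cosh t ^ (2 * k)) := by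
    intro t
    rw [expand_prod m c (Real.cosh t ^ 2), Finset.mul_sum]
    apply Finset.sum_congr rfl
    intro k _
    rw [← pow_mul]
    ring
  have hint : ∀ k : ℕ, IntervalIntegrable
      (fun t => (∑ T ∈ (Finset.univ : Finset (Fin m)).powersetCard (m - k), ∏ j ∈ T, c j) *
        (Real.sinh t ^ 2 * Real.cosh t ^ (2 * k))) MeasureTheory.volume 0 r :=
    fun k => (Continuous.intervalIntegrable (by continuity) 0 r)
  calc (∫ t in (0:ℝ)..r, Real.sinh t ^ 2 * ∏ j, (Real.cosh t ^ 2 + c j))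
      = ∑ k ∈ Finset.range (m + 1),
          ∫ t in (0:ℝ)..r,
            (∑ T ∈ (Finset.univ : Finset (Fin m)).powersetCard (m - k), ∏ j ∈ T, c j) *
              (Real.sinh t ^ 2 * Real.cosh t ^ (2 * k)) := by
        rw [← intervalIntegral.integral_finset_sum (fun k _ => hint k)]
        simp_rw [← hrw]
    _ ≤ _ := by
        apply Finset.sum_le_sum
        intro k _
        rw [intervalIntegral.integral_const_mul]
        exact mul_le_mul_of_nonneg_left (key_integral k hr)
          (Finset.sum_nonneg fun T _ => Finset.prod_nonneg fun j _ => hc j)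
end

section
/- Let m be a natural number, let r > 0 be a real number, and let x₁, …, x_m be real numbers with 0 ≤ x_j ≤ r for every j. Then ∫₀^r sinh²(t)·∏_{j=1}^{m}(cosh²(t) + cosh²(x_j)) dt ≤ 2^{m+1}·sinh(r)·cosh^{2m+1}(r). -/
open Real

/-- Key inductive step in the proof of Proposition 2: for `0 ≤ x_j ≤ r`,
`∫₀^r sinh²(t)·∏_j(cosh²(t) + cosh²(x_j)) dt ≤ 2^{m+1}·sinh(r)·cosh^{2m+1}(r)`. -/
theorem stmt_5 (m : ℕ) (r : ℝ) (hr : 0 < r) (x : Fin m → ℝ)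
    (hx : ∀ j, 0 ≤ x j ∧ x j ≤ r) :
    (∫ t in (0:ℝ)..r, Real.sinh t ^ 2 * ∏ j, (Real.cosh t ^ 2 + Real.cosh (x j) ^ 2))
      ≤ 2 ^ (m + 1) * Real.sinh r * Real.cosh r ^ (2 * m + 1) := by
  set C : ℝ := 2 ^ m * Real.cosh r ^ (2 * m) with hC
  have hcosh1 : (1:ℝ) ≤ Real.cosh r := Real.one_le_cosh r
  have hsinh : 0 ≤ Real.sinh r := Real.sinh_nonneg_iff.2 hr.le
  have hsc : Real.sinh r ≤ Real.cosh r := by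
    nlinarith [Real.cosh_sq_sub_sinh_sq r, Real.cosh_pos r]
  -- Step 1: pointwise bound on [0, r]
  have hbound : ∀ t ∈ Set.Icc (0:ℝ) r,
      Real.sinh t ^ 2 * ∏ j, (Real.cosh t ^ 2 + Real.cosh (x j) ^ 2)
        ≤ C * (Real.sinh t * Real.cosh t) := by
    intro t ht
    have hst : 0 ≤ Real.sinh t := Real.sinh_nonneg_iff.2 ht.1
    have hstr : Real.sinh t ≤ Real.sinh r := Real.sinh_le_sinh.2 ht.2
    have hctr : Real.cosh t ≤ Real.cosh r := by
      rw [Real.cosh_le_cosh] <;> simp [abs_of_nonneg, ht.1, hr.le, ht.2]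
    have hstc : Real.sinh t ≤ Real.cosh t := by
      nlinarith [Real.cosh_sq_sub_sinh_sq t, Real.cosh_pos t]
    have hprod : (∏ j, (Real.cosh t ^ 2 + Real.cosh (x j) ^ 2))
        ≤ ∏ _j : Fin m, (2 * Real.cosh r ^ 2) := by
      apply Finset.prod_le_prod
      · intro j _
        positivity
      · intro j _
        have h1 : Real.cosh (x j) ≤ Real.cosh r := by
          rw [Real.cosh_le_cosh]
          simp [abs_of_nonneg, (hx j).1, hr.le, (hx j).2]
        nlinarith [Real.cosh_pos (x j), Real.cosh_pos t, Real.cosh_pos r]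
    have hprodval : (∏ _j : Fin m, (2 * Real.cosh r ^ 2)) = C := by
      rw [Finset.prod_const]
      simp [hC, mul_pow, pow_mul, Finset.card_univ]
    have hprodnn : 0 ≤ ∏ j, (Real.cosh t ^ 2 + Real.cosh (x j) ^ 2) :=
      Finset.prod_nonneg fun j _ => by positivity
    have hCpos : 0 < C := by positivity
    calc Real.sinh t ^ 2 * ∏ j, (Real.cosh t ^ 2 + Real.cosh (x j) ^ 2)
        ≤ (Real.sinh t * Real.cosh t) * C := by
          have h2 : Real.sinh t ^ 2 ≤ Real.sinh t * Real.cosh t := by nlinarith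
          have h3 : (∏ j, (Real.cosh t ^ 2 + Real.cosh (x j) ^ 2)) ≤ C := by
            rw [← hprodval]; exact hprod
          have hsct : 0 ≤ Real.sinh t * Real.cosh t := by
            positivity
          exact mul_le_mul h2 h3 hprodnn hsct
      _ = C * (Real.sinh t * Real.cosh t) := by ring
  -- Step 2: compare integrals
  have hint1 : IntervalIntegrable
      (fun t => Real.sinh t ^ 2 * ∏ j, (Real.cosh t ^ 2 + Real.cosh (x j) ^ 2))
      MeasureTheory.volume 0 r := by
    apply Continuous.intervalIntegrable
    continuity
  have hint2 : IntervalIntegrable (fun t => C * (Real.sinh t * Real.cosh t))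
      MeasureTheory.volume 0 r := by
    apply Continuous.intervalIntegrable
    continuity
  have hmono := intervalIntegral.integral_mono_on hr.le hint1 hint2 hbound
  -- Step 3: compute the bounding integral
  have hderiv : ∀ t ∈ Set.uIcc (0:ℝ) r,
      HasDerivAt (fun s => Real.sinh s ^ 2 / 2) (Real.sinh t * Real.cosh t) t := by
    intro t _
    have := ((Real.hasDerivAt_sinh t).pow 2).div_const 2
    simpa [mul_comm, mul_assoc, mul_div_assoc] using this
  have hcalc : (∫ t in (0:ℝ)..r, Real.sinh t * Real.cosh t) = Real.sinh r ^ 2 / 2 := by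
    rw [intervalIntegral.integral_eq_sub_of_hasDerivAt hderiv]
    · simp
    · apply Continuous.intervalIntegrable; continuity
  rw [intervalIntegral.integral_const_mul, hcalc] at hmono
  calc (∫ t in (0:ℝ)..r, Real.sinh t ^ 2 * ∏ j, (Real.cosh t ^ 2 + Real.cosh (x j) ^ 2))
      ≤ C * (Real.sinh r ^ 2 / 2) := hmono
    _ ≤ 2 ^ (m + 1) * Real.sinh r * Real.cosh r ^ (2 * m + 1) := by
        rw [hC]
        have h2m : (0:ℝ) < 2 ^ m := by positivity
        have hpow : (0:ℝ) < Real.cosh r ^ (2 * m) := by positivity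
        have : Real.sinh r ^ 2 / 2 ≤ 2 * Real.sinh r * Real.cosh r := by nlinarith
        calc 2 ^ m * Real.cosh r ^ (2 * m) * (Real.sinh r ^ 2 / 2)
            ≤ 2 ^ m * Real.cosh r ^ (2 * m) * (2 * Real.sinh r * Real.cosh r) := by
              apply mul_le_mul_of_nonneg_left this (by positivity)
          _ = 2 ^ (m + 1) * Real.sinh r * Real.cosh r ^ (2 * m + 1) := by ring
end

section
/- For every real number r > 0 and every natural number k, one has 2·∫₀^r sinh²(t)·cosh^{2k}(t) dt ≤ sinh³(r)·cosh^{2k}(r)/cosh(r) + sinh(r)·cosh(r). -/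
open Real

/-- Elementary integral inequality used in the inductive proof of Proposition 2:
`2·∫₀^r sinh²(t)·cosh^{2k}(t) dt ≤ sinh³(r)·cosh^{2k}(r)/cosh(r) + sinh(r)·cosh(r)`. -/
theorem stmt_6 (r : ℝ) (hr : 0 < r) (k : ℕ) :
    2 * ∫ t in (0:ℝ)..r, Real.sinh t ^ 2 * Real.cosh t ^ (2 * k)
      ≤ Real.sinh r ^ 3 * Real.cosh r ^ (2 * k) / Real.cosh r
        + Real.sinh r * Real.cosh r := by
  set g : ℝ → ℝ := fun t =>
    ((((3:ℕ) * Real.sinh t ^ (3-1) * Real.cosh t) * Real.cosh t ^ (2*k)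
        + Real.sinh t ^ 3 * ((2*k : ℕ) * Real.cosh t ^ (2*k-1) * Real.sinh t)) * Real.cosh t
      - Real.sinh t ^ 3 * Real.cosh t ^ (2*k) * Real.sinh t) / Real.cosh t ^ 2
    + (Real.cosh t * Real.cosh t + Real.sinh t * Real.sinh t) with hg
  have hG : ∀ t : ℝ, HasDerivAt
      (fun t => Real.sinh t ^ 3 * Real.cosh t ^ (2*k) / Real.cosh t + Real.sinh t * Real.cosh t)
      (g t) t := by
    intro t
    have h1 := (((Real.hasDerivAt_sinh t).pow 3).mul
        ((Real.hasDerivAt_cosh t).pow (2*k))).div (Real.hasDerivAt_cosh t)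
        (ne_of_gt (Real.cosh_pos t))
    have h2 := (Real.hasDerivAt_sinh t).mul (Real.hasDerivAt_cosh t)
    exact h1.add h2
  have hgcont : Continuous g := by
    apply Continuous.add
    · exact Continuous.div (by continuity) (by continuity)
        (fun t => by positivity)
    · continuity
  have hint : ∫ t in (0:ℝ)..r, g t
      = (Real.sinh r ^ 3 * Real.cosh r ^ (2*k) / Real.cosh r + Real.sinh r * Real.cosh r)
        - (Real.sinh 0 ^ 3 * Real.cosh 0 ^ (2*k) / Real.cosh 0 + Real.sinh 0 * Real.cosh 0) :=
    intervalIntegral.integral_eq_sub_of_hasDerivAt (fun t _ => hG t)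
      (hgcont.intervalIntegrable 0 r)
  rw [Real.sinh_zero] at hint
  simp only [ne_eq, OfNat.ofNat_ne_zero, not_false_eq_true, zero_pow, zero_mul, zero_div,
    mul_zero, add_zero, sub_zero] at hint
  rw [← intervalIntegral.integral_const_mul, ← hint]
  apply intervalIntegral.integral_mono_on hr.le
  · exact (Continuous.intervalIntegrable (by continuity) 0 r)
  · exact hgcont.intervalIntegrable 0 r
  · intro t ht
    obtain ⟨ht0, _⟩ := ht
    have hs : 0 ≤ Real.sinh t := Real.sinh_nonneg_iff.mpr ht0
    have hc : 1 ≤ Real.cosh t := Real.one_le_cosh t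
    have hc0 : 0 < Real.cosh t := Real.cosh_pos t
    have hs2 : Real.sinh t ^ 2 ≤ Real.cosh t ^ 2 := by
      nlinarith [Real.cosh_sq t]
    have hC : (0:ℝ) ≤ Real.cosh t ^ (2*k) := by positivity
    have hkey : Real.sinh t ^ 4 * Real.cosh t ^ (2*k)
        ≤ Real.sinh t ^ 2 * Real.cosh t ^ 2 * Real.cosh t ^ (2*k) := by
      have := mul_le_mul_of_nonneg_right hs2 hC
      nlinarith [sq_nonneg (Real.sinh t), this]
    have hD : (0:ℝ) ≤ Real.sinh t ^ 3 * ((2*k : ℕ) * Real.cosh t ^ (2*k-1) * Real.sinh t)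
        * Real.cosh t := by positivity
    rw [hg]
    rw [← sub_le_iff_le_add, le_div_iff₀ (by positivity)]
    push_cast at hD ⊢
    nlinarith [hkey, hD, sq_nonneg (Real.cosh t), sq_nonneg (Real.sinh t * Real.cosh t),
      mul_pos hc0 hc0, hC]
end

section
/- For every natural number g and every tuple of real numbers x₁, …, x_g, one has ∏_{j=1}^{g} cosh(x_j) ≥ cosh( ( ∑_{j=1}^{g} x_j² )^{1/2} ). -/
open Real Set

/-- `sinh t ≤ t * cosh t` for `t ≥ 0`. -/
lemma aux_sinh_le_mul_cosh {t : ℝ} (ht : 0 ≤ t) : Real.sinh t ≤ t * Real.cosh t := by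
  have key : MonotoneOn (fun t : ℝ => t * Real.cosh t - Real.sinh t) (Ici 0) := by
    apply monotoneOn_of_deriv_nonneg (convex_Ici 0)
    · exact ((continuous_id.mul Real.continuous_cosh).sub Real.continuous_sinh).continuousOn
    · intro u hu
      exact (((hasDerivAt_id u).mul (Real.hasDerivAt_cosh u)).sub
        (Real.hasDerivAt_sinh u)).differentiableAt.differentiableWithinAt
    · intro u hu
      rw [interior_Ici] at hu
      have h : HasDerivAt (fun t : ℝ => t * Real.cosh t - Real.sinh t)
          (1 * Real.cosh u + u * Real.sinh u - Real.cosh u) u :=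
        ((hasDerivAt_id u).mul (Real.hasDerivAt_cosh u)).sub (Real.hasDerivAt_sinh u)
      rw [h.deriv]
      have hu' : (0:ℝ) < u := hu
      have : 0 ≤ Real.sinh u := (Real.sinh_pos_iff.2 hu').le
      nlinarith
  have := key (self_mem_Ici (a := (0:ℝ))) (mem_Ici.2 ht) ht
  simp at this
  linarith

/-- `sinh t / t` is monotone on `Ioi 0`. -/
lemma aux_sinh_div_mono : MonotoneOn (fun t : ℝ => Real.sinh t / t) (Ioi 0) := by
  apply monotoneOn_of_deriv_nonneg (convex_Ioi 0)
  · exact ContinuousOn.div Real.continuous_sinh.continuousOn continuousOn_id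
      (fun u hu => ne_of_gt hu)
  · intro u hu
    rw [interior_Ioi] at hu
    exact ((Real.hasDerivAt_sinh u).div (hasDerivAt_id u)
      (ne_of_gt hu)).differentiableAt.differentiableWithinAt
  · intro u hu
    rw [interior_Ioi] at hu
    have h : HasDerivAt (fun t : ℝ => Real.sinh t / t)
        ((Real.cosh u * u - Real.sinh u * 1) / u ^ 2) u :=
      (Real.hasDerivAt_sinh u).div (hasDerivAt_id u) (ne_of_gt hu)
    rw [h.deriv]
    apply div_nonneg _ (sq_nonneg u)
    have := aux_sinh_le_mul_cosh (le_of_lt hu)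
    nlinarith

/-- `u ↦ cosh (√u)` is convex on `[0, ∞)`. -/
lemma aux_convex : ConvexOn ℝ (Ici 0) (fun u : ℝ => Real.cosh (Real.sqrt u)) := by
  have hderiv : ∀ u : ℝ, 0 < u → HasDerivAt (fun u : ℝ => Real.cosh (Real.sqrt u))
      (Real.sinh (Real.sqrt u) * (1 / (2 * Real.sqrt u))) u := by
    intro u hu
    exact (Real.hasDerivAt_cosh (Real.sqrt u)).comp u (Real.hasDerivAt_sqrt (ne_of_gt hu))
  apply MonotoneOn.convexOn_of_deriv (convex_Ici 0)
  · exact (Real.continuous_cosh.comp Real.continuous_sqrt).continuousOn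
  · intro u hu
    rw [interior_Ici] at hu
    exact (hderiv u hu).differentiableAt.differentiableWithinAt
  · intro u hu v hv huv
    rw [interior_Ici] at hu hv
    rw [(hderiv u hu).deriv, (hderiv v hv).deriv]
    have hsu : 0 < Real.sqrt u := Real.sqrt_pos.2 hu
    have hsv : 0 < Real.sqrt v := Real.sqrt_pos.2 hv
    have hmono := aux_sinh_div_mono (mem_Ioi.2 hsu) (mem_Ioi.2 hsv)
      (Real.sqrt_le_sqrt huv)
    simp only at hmono
    rw [mul_one_div, mul_one_div]
    calc Real.sinh (Real.sqrt u) / (2 * Real.sqrt u)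
        = (Real.sinh (Real.sqrt u) / Real.sqrt u) / 2 := by ring
      _ ≤ (Real.sinh (Real.sqrt v) / Real.sqrt v) / 2 := by linarith
      _ = Real.sinh (Real.sqrt v) / (2 * Real.sqrt v) := by ring

/-- Two-variable case: `cosh √(a+b) ≤ cosh √a * cosh √b` for `a, b ≥ 0`. -/
lemma aux_two_var {a b : ℝ} (ha : 0 ≤ a) (hb : 0 ≤ b) :
    Real.cosh (Real.sqrt (a + b)) ≤ Real.cosh (Real.sqrt a) * Real.cosh (Real.sqrt b) := by
  set p := Real.sqrt a + Real.sqrt b with hp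
  set q := Real.sqrt a - Real.sqrt b with hq
  have hsa : Real.sqrt a ^ 2 = a := Real.sq_sqrt ha
  have hsb : Real.sqrt b ^ 2 = b := Real.sq_sqrt hb
  have hmid : (1/2 : ℝ) • (p ^ 2) + (1/2 : ℝ) • (q ^ 2) = a + b := by
    simp only [smul_eq_mul, hp, hq]; nlinarith
  have hcvx := aux_convex.2 (mem_Ici.2 (sq_nonneg p)) (mem_Ici.2 (sq_nonneg q))
    (by norm_num : (0:ℝ) ≤ 1/2) (by norm_num : (0:ℝ) ≤ 1/2) (by norm_num)
  rw [hmid] at hcvx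
  have hfp : Real.cosh (Real.sqrt (p ^ 2)) = Real.cosh p := by
    rw [Real.sqrt_sq_eq_abs, Real.cosh_abs]
  have hfq : Real.cosh (Real.sqrt (q ^ 2)) = Real.cosh q := by
    rw [Real.sqrt_sq_eq_abs, Real.cosh_abs]
  simp only [smul_eq_mul] at hcvx
  rw [hfp, hfq] at hcvx
  have hadd : Real.cosh p = Real.cosh (Real.sqrt a) * Real.cosh (Real.sqrt b)
      + Real.sinh (Real.sqrt a) * Real.sinh (Real.sqrt b) := Real.cosh_add _ _
  have hsub : Real.cosh q = Real.cosh (Real.sqrt a) * Real.cosh (Real.sqrt b)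
      - Real.sinh (Real.sqrt a) * Real.sinh (Real.sqrt b) := Real.cosh_sub _ _
  linarith

/-- First half of the elementary inequality used in the proofs of the main theorems:
`cosh((∑_j x_j²)^{1/2}) ≤ ∏_j cosh(x_j)`. -/
theorem stmt_7 (g : ℕ) (x : Fin g → ℝ) :
    Real.cosh (Real.sqrt (∑ j, x j ^ 2)) ≤ ∏ j, Real.cosh (x j) := by
  induction g with
  | zero => simp
  | succ n ih =>
    rw [Fin.sum_univ_succ, Fin.prod_univ_succ]
    have hS : 0 ≤ ∑ j : Fin n, x j.succ ^ 2 :=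
      Finset.sum_nonneg fun j _ => sq_nonneg _
    calc Real.cosh (Real.sqrt (x 0 ^ 2 + ∑ j : Fin n, x j.succ ^ 2))
        ≤ Real.cosh (Real.sqrt (x 0 ^ 2)) *
            Real.cosh (Real.sqrt (∑ j : Fin n, x j.succ ^ 2)) :=
          aux_two_var (sq_nonneg _) hS
      _ = Real.cosh (x 0) * Real.cosh (Real.sqrt (∑ j : Fin n, x j.succ ^ 2)) := by
          rw [Real.sqrt_sq_eq_abs, Real.cosh_abs]
      _ ≤ Real.cosh (x 0) * ∏ j : Fin n, Real.cosh (x j.succ) := by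
          exact mul_le_mul_of_nonneg_left (ih _) (Real.cosh_pos _).le
end

section
/- Let g ≥ 1 be an integer, let X and U be real symmetric g×g matrices, and let Y and V be real symmetric positive definite g×g matrices. Set Z := X_ℂ + i·Y_ℂ and W := U_ℂ + i·V_ℂ (complex g×g matrices, with X_ℂ etc. the coercions of the real matrices into complex matrices), and define the cross-ratio matrix ρ(Z, W) := (Z − W)·(conj(Z) − W)⁻¹·(conj(Z) − conj(W))·(Z − conj(W))⁻¹, where conj denotes entrywise complex conjugation. Then the matrices conj(Z) − W and Z − conj(W) are invertible, and det(I − ρ(Z, W)) = 4^g·det(Y)·det(V)/|det(Z − conj(W))|², where the left-hand side is a complex determinant, det(Y) and det(V) are real determinants, and the equality asserts that the complex number det(I − ρ(Z, W)) equals the stated nonnegative real number. -/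
open Matrix Complex

lemma dot_decomp {g : ℕ} (M : Matrix (Fin g) (Fin g) ℝ) (v : Fin g → ℂ) :
    star v ⬝ᵥ (M.map (Complex.ofReal)) *ᵥ v =
      (((fun i => (v i).re) ⬝ᵥ M *ᵥ (fun i => (v i).re)
        + (fun i => (v i).im) ⬝ᵥ M *ᵥ (fun i => (v i).im) : ℝ) : ℂ)
      + Complex.I * (((fun i => (v i).re) ⬝ᵥ M *ᵥ (fun i => (v i).im)
        - (fun i => (v i).im) ⬝ᵥ M *ᵥ (fun i => (v i).re) : ℝ) : ℂ) := by
  simp only [dotProduct, mulVec, Matrix.map_apply, Pi.star_apply, Finset.mul_sum]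
  push_cast
  apply Complex.ext <;>
    simp only [Complex.re_sum, Complex.im_sum, Finset.sum_sub_distrib,
      Complex.add_re, Complex.add_im, Complex.sub_re, Complex.sub_im,
      Complex.mul_re, Complex.mul_im, Complex.I_re, Complex.I_im,
      Complex.ofReal_re, Complex.ofReal_im, Complex.conj_re, Complex.conj_im,
      RingHom.coe_comp, Complex.star_def, Finset.sum_const_zero, mul_zero,
      zero_mul, sub_zero, zero_sub, one_mul, zero_add, add_zero,
      neg_mul, neg_neg, mul_neg] <;>
    simp only [← Finset.sum_sub_distrib, ← Finset.sum_add_distrib, Finset.sum_neg_distrib,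
      sub_neg_eq_add]
  all_goals exact Finset.sum_congr rfl fun i _ => Finset.sum_congr rfl fun j _ => by ring

lemma det_ne_zero_of_posDef_im {g : ℕ} (S T : Matrix (Fin g) (Fin g) ℝ)
    (hS : S.IsSymm) (hT : T.PosDef) :
    (S.map (Complex.ofReal) + Complex.I • T.map (Complex.ofReal)).det ≠ 0 := by
  intro h
  obtain ⟨v, hv, hmv⟩ := (Matrix.exists_mulVec_eq_zero_iff).2 h
  have hz : star v ⬝ᵥ (S.map (Complex.ofReal) + Complex.I • T.map (Complex.ofReal)) *ᵥ v = 0 := by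
    rw [hmv, dotProduct_zero]
  set a : Fin g → ℝ := fun i => (v i).re with ha
  set b : Fin g → ℝ := fun i => (v i).im with hb
  have hsymm : ∀ (M : Matrix (Fin g) (Fin g) ℝ), M.IsSymm →
      a ⬝ᵥ M *ᵥ b = b ⬝ᵥ M *ᵥ a := by
    intro M hM
    calc a ⬝ᵥ M *ᵥ b = (Mᵀ *ᵥ a) ⬝ᵥ b := by
            rw [Matrix.mulVec_transpose, ← Matrix.dotProduct_mulVec]
      _ = b ⬝ᵥ M *ᵥ a := by rw [hM, dotProduct_comm]
  rw [add_mulVec, smul_mulVec, dotProduct_add, dotProduct_smul, dot_decomp, dot_decomp,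
    ← ha, ← hb, hsymm S hS, hsymm T (by simpa [Matrix.IsSymm] using hT.isHermitian)] at hz
  simp only [sub_self, Complex.ofReal_zero, mul_zero, add_zero, smul_eq_mul] at hz
  have him := congrArg Complex.im hz
  simp only [Complex.add_im, Complex.ofReal_im, Complex.mul_im, Complex.I_re, Complex.I_im,
    Complex.add_re, Complex.ofReal_re, Complex.zero_im, zero_mul, one_mul, zero_add,
    mul_zero, add_zero] at him
  -- him : a ⬝ᵥ T *ᵥ a + b ⬝ᵥ T *ᵥ b = 0
  have hab : a ≠ 0 ∨ b ≠ 0 := by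
    by_contra hc
    push_neg at hc
    apply hv
    funext i
    have h1 := congrFun hc.1 i
    have h2 := congrFun hc.2 i
    simp only [ha, hb, Pi.zero_apply] at h1 h2
    exact Complex.ext h1 h2
  have hTnn : ∀ x : Fin g → ℝ, 0 ≤ x ⬝ᵥ T *ᵥ x := fun x => by simpa using hT.posSemidef.dotProduct_mulVec_nonneg x
  have hTpos : ∀ x : Fin g → ℝ, x ≠ 0 → 0 < x ⬝ᵥ T *ᵥ x := fun x hx => by simpa using hT.dotProduct_mulVec_pos hx
  rcases hab with h' | h'
  · nlinarith [hTpos a h', hTnn b]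
  · nlinarith [hTpos b h', hTnn a]

/-- Cross-ratio determinant identity (equations (bkseries-3)–(bkseries-7)): for points
`Z = X + iY`, `W = U + iV` of the Siegel upper half space, the matrices `conj Z − W` and
`Z − conj W` are invertible, and
`det(I − ρ(Z,W)) = 4^g·det(Y)·det(V)/|det(Z − conj W)|²`, where
`ρ(Z,W) = (Z−W)(conj Z−W)⁻¹(conj Z−conj W)(Z−conj W)⁻¹`. -/
theorem stmt_12 (g : ℕ) (hg : 1 ≤ g) (X U Y V : Matrix (Fin g) (Fin g) ℝ)
    (hX : X.IsSymm) (hU : U.IsSymm) (hY : Y.PosDef) (hV : V.PosDef) :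
    let Z : Matrix (Fin g) (Fin g) ℂ :=
      X.map (Complex.ofReal) + Complex.I • Y.map (Complex.ofReal)
    let W : Matrix (Fin g) (Fin g) ℂ :=
      U.map (Complex.ofReal) + Complex.I • V.map (Complex.ofReal)
    let Zc : Matrix (Fin g) (Fin g) ℂ := Z.map (starRingEnd ℂ)
    let Wc : Matrix (Fin g) (Fin g) ℂ := W.map (starRingEnd ℂ)
    IsUnit (Zc - W) ∧ IsUnit (Z - Wc) ∧
      ((1 : Matrix (Fin g) (Fin g) ℂ) - (Z - W) * (Zc - W)⁻¹ * (Zc - Wc) * (Z - Wc)⁻¹).det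
        = (((4 ^ g * Y.det * V.det / ‖(Z - Wc).det‖ ^ 2 : ℝ)) : ℂ) := by
  intro Z W Zc Wc
  set Ym : Matrix (Fin g) (Fin g) ℂ := Y.map (Complex.ofReal) with hYm
  set Vm : Matrix (Fin g) (Fin g) ℂ := V.map (Complex.ofReal) with hVm
  set A : Matrix (Fin g) (Fin g) ℂ := Zc - W with hAdef
  set B : Matrix (Fin g) (Fin g) ℂ := Z - Wc with hBdef
  have hB : B = (X - U).map (Complex.ofReal) + Complex.I • (Y + V).map (Complex.ofReal) := by
    ext i j
    simp [hBdef, Z, Wc, W, Matrix.map_apply, Matrix.sub_apply, Matrix.add_apply,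
      Matrix.smul_apply, smul_eq_mul, map_add, _root_.map_mul, Complex.conj_ofReal, Complex.conj_I]
    try ring
  have hABconj : A = B.map (starRingEnd ℂ) := by
    ext i j
    simp [hAdef, hBdef, Z, W, Zc, Wc, Matrix.map_apply, Matrix.sub_apply, Matrix.add_apply,
      Matrix.smul_apply, smul_eq_mul, map_add, _root_.map_mul, map_sub, Complex.conj_ofReal,
      Complex.conj_I]
    try ring
  have hdB : B.det ≠ 0 := by
    rw [hB]
    exact det_ne_zero_of_posDef_im (X - U) (Y + V) (hX.sub hU) (hY.add hV)
  have hdA : A.det = (starRingEnd ℂ) B.det := by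
    rw [hABconj, ← RingHom.mapMatrix_apply, ← RingHom.map_det]
  have hdA' : A.det ≠ 0 := by
    rw [hdA]
    exact fun h => hdB (by simpa using congrArg (starRingEnd ℂ) h)
  have hAunit : IsUnit A := by
    rw [Matrix.isUnit_iff_isUnit_det]
    exact isUnit_iff_ne_zero.2 hdA'
  have hBunit : IsUnit B := by
    rw [Matrix.isUnit_iff_isUnit_det]
    exact isUnit_iff_ne_zero.2 hdB
  refine ⟨hAunit, hBunit, ?_⟩
  have hAAr : A * A⁻¹ = 1 := Matrix.mul_nonsing_inv _ (isUnit_iff_ne_zero.2 hdA')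
  have hAAl : A⁻¹ * A = 1 := Matrix.nonsing_inv_mul _ (isUnit_iff_ne_zero.2 hdA')
  have hBBr : B * B⁻¹ = 1 := Matrix.mul_nonsing_inv _ (isUnit_iff_ne_zero.2 hdB)
  -- key matrix identities
  have key1 : Z - W = A + (2 * Complex.I) • Ym := by
    ext i j
    simp [hAdef, Z, W, Zc, Wc, hYm, Matrix.map_apply, Matrix.sub_apply, Matrix.add_apply,
      Matrix.smul_apply, smul_eq_mul, map_add, _root_.map_mul, Complex.conj_ofReal, Complex.conj_I]
    try ring
  have key2 : B - (Zc - Wc) = (2 * Complex.I) • Ym := by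
    ext i j
    simp [hBdef, Z, W, Zc, Wc, hYm, Matrix.map_apply, Matrix.sub_apply, Matrix.add_apply,
      Matrix.smul_apply, smul_eq_mul, map_add, _root_.map_mul, Complex.conj_ofReal, Complex.conj_I]
    try ring
  have key3 : A - (Zc - Wc) = (-(2 * Complex.I)) • Vm := by
    ext i j
    simp [hAdef, Z, W, Zc, Wc, hVm, Matrix.map_apply, Matrix.sub_apply, Matrix.add_apply,
      Matrix.smul_apply, smul_eq_mul, map_add, _root_.map_mul, Complex.conj_ofReal, Complex.conj_I]
    try ring
  have e1 : (Z - W) * A⁻¹ * (Zc - Wc)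
      = (Zc - Wc) + (2 * Complex.I) • (Ym * (A⁻¹ * (Zc - Wc))) := by
    rw [key1, add_mul, smul_mul_assoc, hAAr, add_mul, one_mul, smul_mul_assoc, mul_assoc]
  have e2 : B - (Z - W) * A⁻¹ * (Zc - Wc) = (4 : ℂ) • (Ym * (A⁻¹ * Vm)) := by
    rw [e1, sub_add_eq_sub_sub, key2, ← smul_sub]
    have h1 : Ym - Ym * (A⁻¹ * (Zc - Wc)) = Ym * (A⁻¹ * (A - (Zc - Wc))) := by
      rw [mul_sub A⁻¹ A (Zc - Wc), hAAl, mul_sub Ym, mul_one]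
    rw [h1, key3, mul_smul_comm, mul_smul_comm, smul_smul]
    congr 1
    rw [show (2 * Complex.I) * -(2 * Complex.I) = -(4 * (Complex.I * Complex.I)) by ring,
      Complex.I_mul_I]
    ring
  have main : (1 : Matrix (Fin g) (Fin g) ℂ) - (Z - W) * A⁻¹ * (Zc - Wc) * B⁻¹
      = ((4 : ℂ) • (Ym * (A⁻¹ * Vm))) * B⁻¹ := by
    rw [← e2, sub_mul B ((Z - W) * A⁻¹ * (Zc - Wc)) B⁻¹, hBBr]
  have hYd : Ym.det = (Y.det : ℂ) := (RingHom.map_det Complex.ofRealHom Y).symm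
  have hVd : Vm.det = (V.det : ℂ) := (RingHom.map_det Complex.ofRealHom V).symm
  have hdAinv : A⁻¹.det = (A.det)⁻¹ := by
    rw [Matrix.det_nonsing_inv, Ring.inverse_eq_inv']
  have hdBinv : B⁻¹.det = (B.det)⁻¹ := by
    rw [Matrix.det_nonsing_inv, Ring.inverse_eq_inv']
  rw [main, Matrix.det_mul, Matrix.det_smul, Fintype.card_fin, Matrix.det_mul, Matrix.det_mul,
    hYd, hVd, hdAinv, hdBinv, hdA]
  have habs : ((‖B.det‖ : ℝ) : ℂ) ^ 2 = B.det * (starRingEnd ℂ) B.det := by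
    rw [Complex.mul_conj, Complex.normSq_eq_norm_sq]
    push_cast
    ring
  have hconjB : (starRingEnd ℂ) B.det ≠ 0 := by
    simpa using hdB
  push_cast
  rw [habs]
  field_simp
end

section
/- Let g ≥ 2 be an integer and let a > 0 be a real number. Then there exists a constant C > 0, depending only on g and a, such that for every real number n ≥ g² + g + 2 and every real number ρ₀ ≥ a, one has ∫_{ρ₀}^{∞} cosh^{g²−1}((ρ + a)/(2√2))·sinh^{g+1}((ρ + a)/(2√2))·cosh^{−n}(ρ/(2√2)) dρ ≤ C·cosh^{−(n − g² − g − 1)}(ρ₀/(2√2)). -/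
open Real MeasureTheory

/-- Tail estimate in the Jorgenson–Lundelius type theorem: for `g ≥ 2` and `a > 0` there
is `C > 0`, depending only on `g` and `a`, such that for all `n ≥ g² + g + 2` and
`ρ₀ ≥ a`,
`∫_{ρ₀}^∞ cosh^{g²−1}((ρ+a)/(2√2))·sinh^{g+1}((ρ+a)/(2√2))·cosh^{−n}(ρ/(2√2)) dρ
 ≤ C·cosh^{−(n−g²−g−1)}(ρ₀/(2√2))`. -/
theorem stmt_15 (g : ℕ) (hg : 2 ≤ g) (a : ℝ) (ha : 0 < a) :
    ∃ C : ℝ, 0 < C ∧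
      ∀ n : ℝ, ((g : ℝ) ^ 2 + g + 2) ≤ n → ∀ ρ₀ : ℝ, a ≤ ρ₀ →
        (∫ ρ in Set.Ici ρ₀,
            Real.cosh ((ρ + a) / (2 * Real.sqrt 2)) ^ (g ^ 2 - 1)
              * Real.sinh ((ρ + a) / (2 * Real.sqrt 2)) ^ (g + 1)
              * Real.cosh (ρ / (2 * Real.sqrt 2)) ^ (-n))
          ≤ C * Real.cosh (ρ₀ / (2 * Real.sqrt 2)) ^ (-(n - ((g : ℝ) ^ 2 + g + 1))) := by
  set s : ℝ := 2 * Real.sqrt 2 with hs_def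
  have hs : 0 < s := by positivity
  set N : ℕ := g ^ 2 + g with hN_def
  have hNcast : (N : ℝ) = (g : ℝ) ^ 2 + g := by push_cast [hN_def]; ring
  set K : ℝ := Real.exp (a / s) with hK_def
  have hK1 : 1 ≤ K := Real.one_le_exp (by positivity)
  have hKpos : 0 < K := lt_of_lt_of_le one_pos hK1
  refine ⟨2 * s * K ^ N, by positivity, ?_⟩
  intro n hn ρ₀ hρ₀
  have hρ₀pos : 0 < ρ₀ := lt_of_lt_of_le ha hρ₀
  set c : ℝ := n - ((g : ℝ) ^ 2 + g + 1) with hc_def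
  have hc1 : 1 ≤ c := by rw [hc_def]; linarith
  set D : ℝ := 2 * K ^ N * Real.cosh (ρ₀ / s) ^ (-c) with hD_def
  have hDpos : 0 < D := by
    have := Real.cosh_pos (ρ₀ / s)
    positivity
  set f : ℝ → ℝ := fun ρ =>
    Real.cosh ((ρ + a) / s) ^ (g ^ 2 - 1) * Real.sinh ((ρ + a) / s) ^ (g + 1)
      * Real.cosh (ρ / s) ^ (-n) with hf_def
  -- pointwise bound
  have hkey : ∀ ρ ∈ Set.Ioi ρ₀, f ρ ≤ D * Real.exp (-(1 / s) * ρ) := by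
    intro ρ hρ
    have hρ0 : 0 < ρ := lt_trans hρ₀pos hρ
    have hρρ₀ : ρ₀ ≤ ρ := le_of_lt hρ
    set x : ℝ := ρ / s with hx_def
    set y : ℝ := (ρ + a) / s with hy_def
    have hx0 : 0 < x := by positivity
    have hy0 : 0 < y := by positivity
    have hsinh_nonneg : 0 ≤ Real.sinh y := Real.sinh_nonneg_iff.mpr hy0.le
    have hsinh_as : 0 ≤ Real.sinh (a / s) :=
      Real.sinh_nonneg_iff.mpr (by positivity)
    have hcx : 0 < Real.cosh x := Real.cosh_pos x
    -- cosh y ≤ cosh x * K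
    have h2 : Real.cosh y ≤ Real.cosh x * K := by
      have hy_eq : y = x + a / s := by rw [hy_def, hx_def, add_div]
      rw [hy_eq, Real.cosh_add, hK_def, ← Real.cosh_add_sinh]
      have := mul_le_mul_of_nonneg_right (Real.sinh_lt_cosh x).le hsinh_as
      nlinarith
    have h3 : Real.sinh y ≤ Real.cosh x * K := (Real.sinh_lt_cosh y).le.trans h2
    have hprod : Real.cosh y ^ (g ^ 2 - 1) * Real.sinh y ^ (g + 1)
        ≤ (Real.cosh x * K) ^ N := by
      calc Real.cosh y ^ (g ^ 2 - 1) * Real.sinh y ^ (g + 1)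
          ≤ (Real.cosh x * K) ^ (g ^ 2 - 1) * (Real.cosh x * K) ^ (g + 1) := by
            apply mul_le_mul
            · exact pow_le_pow_left₀ (Real.cosh_pos y).le h2 _
            · exact pow_le_pow_left₀ hsinh_nonneg h3 _
            · positivity
            · positivity
        _ = (Real.cosh x * K) ^ N := by
            rw [← pow_add]; congr 1
            have : 1 ≤ g ^ 2 := Nat.one_le_pow _ _ (by omega)
            omega
    have hstep1 : f ρ ≤ K ^ N * Real.cosh x ^ ((N : ℝ) - n) := by
      have := mul_le_mul_of_nonneg_right hprod
        (Real.rpow_nonneg hcx.le (-n))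
      calc f ρ ≤ (Real.cosh x * K) ^ N * Real.cosh x ^ (-n) := this
        _ = K ^ N * (Real.cosh x ^ ((N : ℝ)) * Real.cosh x ^ (-n)) := by
            rw [mul_pow, ← Real.rpow_natCast (Real.cosh x) N]; ring
        _ = K ^ N * Real.cosh x ^ ((N : ℝ) - n) := by
            rw [← Real.rpow_add hcx, ← sub_eq_add_neg]
    have hsplit : Real.cosh x ^ ((N : ℝ) - n)
        = Real.cosh x ^ (-c) * Real.cosh x ^ (-(1 : ℝ)) := by
      rw [← Real.rpow_add hcx]
      congr 1
      rw [hc_def, hNcast]; ring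
    have hmono : Real.cosh x ^ (-c) ≤ Real.cosh (ρ₀ / s) ^ (-c) := by
      apply Real.rpow_le_rpow_of_nonpos (Real.cosh_pos _)
      · apply Real.cosh_le_cosh.mpr
        rw [abs_of_nonneg (by positivity), abs_of_nonneg hx0.le, hx_def]
        gcongr
      · linarith
    have hinv : Real.cosh x ^ (-(1 : ℝ)) ≤ 2 * Real.exp (-x) := by
      have hhalf : Real.exp x / 2 ≤ Real.cosh x := by
        rw [Real.cosh_eq]
        have := (Real.exp_pos (-x)).le
        linarith
      rw [Real.rpow_neg_one]
      calc (Real.cosh x)⁻¹ ≤ (Real.exp x / 2)⁻¹ := by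
            apply inv_anti₀ (by positivity) hhalf
        _ = 2 * Real.exp (-x) := by
            rw [Real.exp_neg]; field_simp
    calc f ρ ≤ K ^ N * Real.cosh x ^ ((N : ℝ) - n) := hstep1
      _ = K ^ N * (Real.cosh x ^ (-c) * Real.cosh x ^ (-(1 : ℝ))) := by rw [hsplit]
      _ ≤ K ^ N * (Real.cosh (ρ₀ / s) ^ (-c) * (2 * Real.exp (-x))) := by
          apply mul_le_mul_of_nonneg_left _ (by positivity)
          exact mul_le_mul hmono hinv (Real.rpow_nonneg hcx.le _)
            (Real.rpow_nonneg (Real.cosh_pos _).le _)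
      _ = D * Real.exp (-(1 / s) * ρ) := by
          rw [hD_def, hx_def]
          have : -(1 / s) * ρ = -(ρ / s) := by field_simp
          rw [this]; ring
  -- integrability
  have hbpos : (0 : ℝ) < 1 / s := by positivity
  have hg_int : IntegrableOn (fun ρ => D * Real.exp (-(1 / s) * ρ)) (Set.Ioi ρ₀) :=
    (exp_neg_integrableOn_Ioi ρ₀ hbpos).const_mul D
  have hf_cont : Continuous f := by
    apply Continuous.mul
    · apply Continuous.mul
      · exact (Real.continuous_cosh.comp (by continuity)).pow _
      · exact (Real.continuous_sinh.comp (by continuity)).pow _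
    · apply Continuous.rpow_const (Real.continuous_cosh.comp (by continuity))
      intro x
      exact Or.inl (Real.cosh_pos _).ne'
  have hf_nonneg : ∀ ρ ∈ Set.Ioi ρ₀, 0 ≤ f ρ := by
    intro ρ hρ
    have hρ0 : 0 < ρ := lt_trans hρ₀pos hρ
    have h1 : 0 ≤ Real.sinh ((ρ + a) / s) := Real.sinh_nonneg_iff.mpr (by positivity)
    have h2 := (Real.cosh_pos ((ρ + a) / s)).le
    have h3 := Real.rpow_nonneg (Real.cosh_pos (ρ / s)).le (-n)
    positivity
  have hf_int : IntegrableOn f (Set.Ioi ρ₀) := by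
    apply MeasureTheory.Integrable.mono hg_int (hf_cont.aestronglyMeasurable.restrict)
    rw [ae_restrict_iff' measurableSet_Ioi]
    apply ae_of_all
    intro ρ hρ
    rw [Real.norm_eq_abs, Real.norm_eq_abs, abs_of_nonneg (hf_nonneg ρ hρ),
      abs_of_nonneg (by positivity : (0:ℝ) ≤ D * Real.exp (-(1 / s) * ρ))]
    exact hkey ρ hρ
  -- compute the integral of the dominating function
  have hval : (∫ ρ in Set.Ioi ρ₀, Real.exp (-(1 / s) * ρ)) = s * Real.exp (-(1 / s) * ρ₀) := by
    have hderiv : ∀ ρ ∈ Set.Ioi ρ₀,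
        HasDerivAt (fun ρ => -s * Real.exp (-(1 / s) * ρ)) (Real.exp (-(1 / s) * ρ)) ρ := by
      intro ρ _
      have h := (((hasDerivAt_id ρ).const_mul (-(1 / s))).exp).const_mul (-s)
      convert h using 1
      · rfl
      · rfl
      · rfl
      · simp only [id]; field_simp
    have htend : Filter.Tendsto (fun ρ => -s * Real.exp (-(1 / s) * ρ))
        Filter.atTop (nhds 0) := by
      have : Filter.Tendsto (fun ρ : ℝ => Real.exp (-(1 / s) * ρ)) Filter.atTop (nhds 0) := by
        apply Real.tendsto_exp_atBot.comp
        exact Filter.Tendsto.const_mul_atTop_of_neg (by linarith) Filter.tendsto_id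
      simpa using this.const_mul (-s)
    have := MeasureTheory.integral_Ioi_of_hasDerivAt_of_tendsto
      (Continuous.continuousWithinAt (by fun_prop))
      hderiv (exp_neg_integrableOn_Ioi ρ₀ hbpos) htend
    rw [this]; ring
  -- put it together
  have hmain : (∫ ρ in Set.Ioi ρ₀, f ρ) ≤ D * s := by
    calc (∫ ρ in Set.Ioi ρ₀, f ρ)
        ≤ ∫ ρ in Set.Ioi ρ₀, D * Real.exp (-(1 / s) * ρ) :=
          setIntegral_mono_on hf_int hg_int measurableSet_Ioi hkey
      _ = D * (s * Real.exp (-(1 / s) * ρ₀)) := by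
          rw [MeasureTheory.integral_const_mul, hval]
      _ ≤ D * (s * 1) := by
          apply mul_le_mul_of_nonneg_left _ hDpos.le
          apply mul_le_mul_of_nonneg_left _ hs.le
          exact Real.exp_le_one_iff.mpr (by nlinarith)
      _ = D * s := by ring
  have hIci : (∫ ρ in Set.Ici ρ₀, f ρ) = ∫ ρ in Set.Ioi ρ₀, f ρ :=
    MeasureTheory.integral_Ici_eq_integral_Ioi
  calc (∫ ρ in Set.Ici ρ₀, f ρ) ≤ D * s := by rw [hIci]; exact hmain
    _ = 2 * s * K ^ N * Real.cosh (ρ₀ / s) ^ (-c) := by rw [hD_def]; ring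
end
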